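/- arXiv:1805.00381 — 3 statements merged into one kernel-verified Lean document; each statement's English description precedes it below -/
import Mathlib

section
/- For every Π_{n+1}-sentence π, C^n_S(T + π) ⊆ C^n_S(T) + π. -/
/-- An abstract propositional language with implication and falsum. -/
structure Lang (F : Type) where
  imp : F → F → F
  bot : F

namespace Lang
variable {F : Type} (L : Lang F)
def neg (φ : F) : F := L.imp φ L.bot
def top : F := L.neg L.bot
def conj (φ ψ : F) : F := L.neg (L.imp φ (L.neg ψ))
def iff (φ ψ : F) : F := L.conj (L.imp φ ψ) (L.imp ψ φ)
end Lang

/-- Classical propositional derivability from a set of axioms `Γ`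
(a Hilbert system with modus ponens). -/
inductive Deriv {F : Type} (L : Lang F) (Γ : Set F) : F → Prop
  | hyp {φ} : φ ∈ Γ → Deriv L Γ φ
  | ax1 (φ ψ) : Deriv L Γ (L.imp φ (L.imp ψ φ))
  | ax2 (φ ψ χ) : Deriv L Γ (L.imp (L.imp φ (L.imp ψ χ)) (L.imp (L.imp φ ψ) (L.imp φ χ)))
  | ax3 (φ ψ) : Deriv L Γ (L.imp (L.imp (L.neg φ) (L.neg ψ)) (L.imp ψ φ))
  | mp {φ ψ} : Deriv L Γ (L.imp φ ψ) → Deriv L Γ φ → Deriv L Γ ψ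

/-- The local reflection schema for a provability predicate `Bx`. -/
def RfnSet {F : Type} (L : Lang F) (Bx : F → F) : Set F := {χ | ∃ ψ, χ = L.imp (Bx ψ) ψ}

namespace DerivAux
variable {F : Type} {L : Lang F} {Γ Δ : Set F}

theorem mono (h : Γ ⊆ Δ) {φ : F} (d : Deriv L Γ φ) : Deriv L Δ φ := by
  induction d with
  | hyp hm => exact Deriv.hyp (h hm)
  | ax1 φ ψ => exact Deriv.ax1 φ ψ
  | ax2 φ ψ χ => exact Deriv.ax2 φ ψ χ
  | ax3 φ ψ => exact Deriv.ax3 φ ψ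
  | mp _ _ ih1 ih2 => exact Deriv.mp ih1 ih2

theorem id_imp (φ : F) : Deriv L Γ (L.imp φ φ) :=
  Deriv.mp (Deriv.mp (Deriv.ax2 φ (L.imp φ φ) φ) (Deriv.ax1 φ (L.imp φ φ))) (Deriv.ax1 φ φ)

theorem deduction {φ ψ : F} (d : Deriv L (Γ ∪ {φ}) ψ) : Deriv L Γ (L.imp φ ψ) := by
  induction d with
  | @hyp χ hm =>
    rcases hm with hm | hm
    · exact Deriv.mp (Deriv.ax1 χ φ) (Deriv.hyp hm)
    · cases hm; exact id_imp φ
  | ax1 a b => exact Deriv.mp (Deriv.ax1 _ φ) (Deriv.ax1 a b)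
  | ax2 a b c => exact Deriv.mp (Deriv.ax1 _ φ) (Deriv.ax2 a b c)
  | ax3 a b => exact Deriv.mp (Deriv.ax1 _ φ) (Deriv.ax3 a b)
  | @mp a b _ _ ih1 ih2 => exact Deriv.mp (Deriv.mp (Deriv.ax2 φ a b) ih1) ih2

theorem hyp_in {φ : F} (h : φ ∈ Γ) : Deriv L Γ φ := Deriv.hyp h

theorem in_union_right (φ : F) : Deriv L (Γ ∪ {φ}) φ := Deriv.hyp (Or.inr rfl)

theorem weaken {φ ψ : F} (d : Deriv L Γ ψ) : Deriv L (Γ ∪ {φ}) ψ :=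
  mono (Set.subset_union_left) d

/-- ex falso: ⊢ ⊥ → φ -/
theorem exfalso' (φ : F) : Deriv L Γ (L.imp L.bot φ) := by
  have h1 : Deriv L Γ (L.imp (L.neg φ) (L.neg L.bot)) :=
    Deriv.mp (Deriv.ax1 _ _) (id_imp L.bot)
  exact Deriv.mp (Deriv.ax3 φ L.bot) h1

/-- ⊢ ¬π → (π → φ) -/
theorem neg_imp (π φ : F) : Deriv L Γ (L.imp (L.neg π) (L.imp π φ)) := by
  apply deduction; apply deduction
  refine Deriv.mp (exfalso' φ) ?_
  exact Deriv.mp (weaken (in_union_right (L.neg π))) (in_union_right π)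

/-- classical: ⊢ (¬A → A) → A -/
theorem clavius (A : F) : Deriv L Γ (L.imp (L.imp (L.neg A) A) A) := by
  have key : Deriv L Γ (L.imp (L.imp (L.neg A) A) (L.imp (L.neg A) (L.neg (L.imp (L.neg A) A)))) := by
    apply deduction; apply deduction; apply deduction
    -- context: {¬A→A, ¬A, ¬A→A}, goal ⊥
    have hna : Deriv L ((Γ ∪ {L.imp (L.neg A) A}) ∪ {L.neg A} ∪ {L.imp (L.neg A) A}) (L.neg A) :=
      weaken (in_union_right _)
    have hA := Deriv.mp (in_union_right (L.imp (L.neg A) A)) hna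
    exact Deriv.mp hna hA
  apply deduction
  have h1 := Deriv.mp (weaken (Γ := Γ) (φ := L.imp (L.neg A) A) key) (in_union_right _)
  have h2 := Deriv.mp (Deriv.ax3 A (L.imp (L.neg A) A)) h1
  exact Deriv.mp h2 (in_union_right _)

/-- case split: from π→A and ¬π→A, get A -/
theorem cases' {π A : F} (h1 : Deriv L Γ (L.imp π A)) (h2 : Deriv L Γ (L.imp (L.neg π) A)) :
    Deriv L Γ A := by
  refine Deriv.mp (clavius A) ?_
  apply deduction
  -- context Γ ∪ {¬A}: goal A
  have hnA : Deriv L (Γ ∪ {L.neg A}) (L.neg A) := in_union_right _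
  -- ¬A → ¬π : from π get A, contradiction... derive ¬π directly
  have hnpi : Deriv L (Γ ∪ {L.neg A}) (L.neg π) := by
    apply deduction
    have hA : Deriv L ((Γ ∪ {L.neg A}) ∪ {π}) A :=
      Deriv.mp (weaken (weaken h1)) (in_union_right π)
    exact Deriv.mp (weaken hnA) hA
  exact Deriv.mp (weaken h2) hnpi

/-- composition: from φ→ψ and ψ→χ, get φ→χ -/
theorem comp' {φ ψ χ : F} (h1 : Deriv L Γ (L.imp φ ψ)) (h2 : Deriv L Γ (L.imp ψ χ)) :
    Deriv L Γ (L.imp φ χ) := by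
  apply deduction
  exact Deriv.mp (weaken h2) (Deriv.mp (weaken h1) (in_union_right φ))

end DerivAux

open DerivAux in
/-- For every `Π_{n+1}`-sentence `π` (so that `¬π` is
`Σ_{n+1}` and provable `Σ_{n+1}`-completeness applies),
`C^n_S(T + π) ⊆ C^n_S(T) + π`. -/
theorem stmt6 {F : Type} (L : Lang F) (S T : Set F) (Bn : F → F) (Sig : Set F)
    (nec : ∀ φ, Deriv L S φ → Deriv L T (Bn φ))
    (dist : ∀ φ ψ, Deriv L T (L.imp (Bn (L.imp φ ψ)) (L.imp (Bn φ) (Bn ψ))))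
    (compl : ∀ σ ∈ Sig, Deriv L T (L.imp σ (Bn σ))) :
    ∀ π, L.neg π ∈ Sig →
      ∀ φ, Deriv L (T ∪ {π}) (Bn φ) → Deriv L ({χ | Deriv L T (Bn χ)} ∪ {π}) φ := by
  intro π hπ φ hd
  -- T ⊢ π → Bn φ
  have D1 : Deriv L T (L.imp π (Bn φ)) := deduction hd
  -- T ⊢ Bn φ → Bn (π → φ)
  have K1 : Deriv L T (L.imp (Bn φ) (Bn (L.imp π φ))) :=
    Deriv.mp (dist φ (L.imp π φ)) (nec _ (Deriv.ax1 φ π))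
  -- T ⊢ Bn ¬π → Bn (π → φ)
  have K2 : Deriv L T (L.imp (Bn (L.neg π)) (Bn (L.imp π φ))) :=
    Deriv.mp (dist (L.neg π) (L.imp π φ)) (nec _ (neg_imp π φ))
  have C1 : Deriv L T (L.imp π (Bn (L.imp π φ))) := comp' D1 K1
  have C2 : Deriv L T (L.imp (L.neg π) (Bn (L.imp π φ))) := comp' (compl _ hπ) K2
  have main : Deriv L T (Bn (L.imp π φ)) := cases' C1 C2
  have h1 : Deriv L ({χ | Deriv L T (Bn χ)} ∪ {π}) (L.imp π φ) := Deriv.hyp (Or.inl main)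
  exact Deriv.mp h1 (Deriv.hyp (Or.inr rfl))
end

section
/- C^n_S(T + ⟨n⟩_S ⊤) is deductively equivalent to C^n_S(T). -/
section Aux
variable {F : Type} {L : Lang F} {Γ Δ : Set F}

theorem Deriv.mono (h : Γ ⊆ Δ) {φ : F} (d : Deriv L Γ φ) : Deriv L Δ φ := by
  induction d with
  | hyp hm => exact .hyp (h hm)
  | ax1 φ ψ => exact .ax1 φ ψ
  | ax2 φ ψ χ => exact .ax2 φ ψ χ
  | ax3 φ ψ => exact .ax3 φ ψ
  | mp _ _ ih1 ih2 => exact .mp ih1 ih2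

theorem Deriv.id (φ : F) : Deriv L Γ (L.imp φ φ) :=
  .mp (.mp (.ax2 φ (L.imp φ φ) φ) (.ax1 φ (L.imp φ φ))) (.ax1 φ φ)

/-- Deduction theorem. -/
theorem Deriv.ded {φ ψ : F} (d : Deriv L (Γ ∪ {φ}) ψ) : Deriv L Γ (L.imp φ ψ) := by
  induction d with
  | @hyp χ hm =>
    rcases hm with h | h
    · exact .mp (.ax1 χ φ) (.hyp h)
    · rw [Set.mem_singleton_iff] at h; subst h; exact .id χ
  | ax1 a b => exact .mp (.ax1 _ φ) (.ax1 a b)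
  | ax2 a b c => exact .mp (.ax1 _ φ) (.ax2 a b c)
  | ax3 a b => exact .mp (.ax1 _ φ) (.ax3 a b)
  | @mp a b _ _ ih1 ih2 => exact .mp (.mp (.ax2 φ a b) ih1) ih2

theorem Deriv.hyp' (φ : F) : Deriv L (Γ ∪ {φ}) φ := .hyp (Or.inr rfl)

theorem Deriv.dni (φ : F) : Deriv L Γ (L.imp φ (L.neg (L.neg φ))) := by
  apply Deriv.ded; apply Deriv.ded
  exact .mp (.hyp' _) ((Deriv.hyp' φ).mono (Set.subset_union_left))

theorem Deriv.contra {φ ψ : F} (d : Deriv L Γ (L.imp (L.neg φ) (L.neg ψ))) :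
    Deriv L Γ (L.imp ψ φ) := .mp (.ax3 φ ψ) d

theorem Deriv.dne (φ : F) : Deriv L Γ (L.imp (L.neg (L.neg φ)) φ) :=
  Deriv.contra (Deriv.dni (L.neg φ))

/-- case analysis -/
theorem Deriv.cases {φ ψ : F} (h1 : Deriv L Γ (L.imp φ ψ))
    (h2 : Deriv L Γ (L.imp (L.neg φ) ψ)) : Deriv L Γ ψ := by
  have key : Deriv L Γ (L.neg (L.neg ψ)) := by
    apply Deriv.ded
    have w : Γ ⊆ Γ ∪ {L.neg ψ} := Set.subset_union_left
    have hnψ : Deriv L (Γ ∪ {L.neg ψ}) (L.neg ψ) := .hyp' _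
    have hnφ : Deriv L (Γ ∪ {L.neg ψ}) (L.neg φ) := by
      apply Deriv.ded
      have hψ : Deriv L ((Γ ∪ {L.neg ψ}) ∪ {φ}) ψ :=
        .mp (h1.mono (Set.subset_union_left.trans Set.subset_union_left)) (.hyp' _)
      exact .mp (hnψ.mono Set.subset_union_left) hψ
    exact .mp hnψ (.mp (h2.mono w) hnφ)
  exact .mp (Deriv.dne ψ) key

theorem Deriv.bot_imp (φ : F) : Deriv L Γ (L.imp L.bot φ) := by
  apply Deriv.ded
  have hb : Deriv L (Γ ∪ {L.bot}) L.bot := .hyp' _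
  have : Deriv L (Γ ∪ {L.bot}) (L.imp (L.neg φ) (L.neg (L.imp φ φ))) :=
    .mp (.ax1 _ _) (.mp (.ax1 _ _) hb)
  exact .mp (Deriv.contra this) (.id φ)

end Aux

theorem stmt7' {F : Type} (L : Lang F) (S T : Set F) (Bn : F → F)
    (nec : ∀ φ, Deriv L S φ → Deriv L T (Bn φ))
    (dist : ∀ φ ψ, Deriv L T (L.imp (Bn (L.imp φ ψ)) (L.imp (Bn φ) (Bn ψ)))) :
    ∀ φ, Deriv L {χ | Deriv L (T ∪ {L.neg (Bn L.bot)}) (Bn χ)} φ ↔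
      Deriv L {χ | Deriv L T (Bn χ)} φ := by
  have hset : {χ | Deriv L (T ∪ {L.neg (Bn L.bot)}) (Bn χ)} = {χ | Deriv L T (Bn χ)} := by
    ext χ
    constructor
    · intro h
      have h1 : Deriv L T (L.imp (L.neg (Bn L.bot)) (Bn χ)) := h.ded
      have h2 : Deriv L T (L.imp (Bn L.bot) (Bn χ)) :=
        .mp (dist L.bot χ) (nec _ (Deriv.bot_imp χ))
      exact Deriv.cases h2 h1
    · intro h
      exact h.mono Set.subset_union_left
  intro φ
  rw [hset]

/-- `C^n_S(T + ⟨n⟩_S ⊤)` is deductively equivalent to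
`C^n_S(T)`, where `⟨n⟩_S ⊤ := ¬[n]_S ⊥` and `C^n_S(U) = {χ : U ⊢ [n]_S χ}`. -/
theorem stmt7 {F : Type} (L : Lang F) (S T : Set F) (Bn : F → F)
    (nec : ∀ φ, Deriv L S φ → Deriv L T (Bn φ))
    (dist : ∀ φ ψ, Deriv L T (L.imp (Bn (L.imp φ ψ)) (L.imp (Bn φ) (Bn ψ)))) :
    ∀ φ, Deriv L {χ | Deriv L (T ∪ {L.neg (Bn L.bot)}) (Bn χ)} φ ↔
      Deriv L {χ | Deriv L T (Bn χ)} φ :=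
  stmt7' L S T Bn nec dist
end

section
/- Base case of the commutation lemma at successor stages: if U := C_S(T) (so EA ⊢ ∀ψ (Box_U ψ ↔ Box_T [1]_S ψ)), then T + Rfn(T) ⊢ [1]_S(Box_U ψ → ψ) for every sentence ψ. -/
namespace Deriv

variable {F : Type} {L : Lang F} {Γ Δ : Set F} {φ ψ χ : F}

theorem mono_s11 (h : Deriv L Γ φ) (hΓΔ : Γ ⊆ Δ) : Deriv L Δ φ := by
  induction h with
  | hyp h => exact hyp (hΓΔ h)
  | ax1 a b => exact ax1 a b
  | ax2 a b c => exact ax2 a b c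
  | ax3 a b => exact ax3 a b
  | mp _ _ ih₁ ih₂ => exact ih₁.mp ih₂

theorem weaken (h : Deriv L Γ ψ) : Deriv L (insert φ Γ) ψ :=
  h.mono_s11 (Set.subset_insert _ _)

theorem assumption : Deriv L (insert φ Γ) φ :=
  hyp (Set.mem_insert _ _)

theorem imp_self : Deriv L Γ (L.imp φ φ) :=
  ((ax2 φ (L.imp φ φ) φ).mp (ax1 φ (L.imp φ φ))).mp (ax1 φ φ)

theorem imp_intro (h : Deriv L (insert φ Γ) ψ) : Deriv L Γ (L.imp φ ψ) := by
  induction h with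
  | hyp h =>
    rcases h with rfl | h
    · exact imp_self
    · exact (ax1 _ _).mp (hyp h)
  | ax1 a b => exact (ax1 _ _).mp (ax1 a b)
  | ax2 a b c => exact (ax1 _ _).mp (ax2 a b c)
  | ax3 a b => exact (ax1 _ _).mp (ax3 a b)
  | mp _ _ ih₁ ih₂ => exact ((ax2 _ _ _).mp ih₁).mp ih₂

theorem imp_trans (h₁ : Deriv L Γ (L.imp φ ψ)) (h₂ : Deriv L Γ (L.imp ψ χ)) :
    Deriv L Γ (L.imp φ χ) :=
  imp_intro (h₂.weaken.mp (h₁.weaken.mp assumption))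

theorem neg_imp : Deriv L Γ (L.imp (L.neg φ) (L.imp φ ψ)) :=
  imp_intro ((ax3 ψ φ).mp ((ax1 _ _).mp assumption))

theorem imp_of_neg_imp_self : Deriv L Γ (L.imp (L.imp (L.neg φ) φ) φ) := by
  apply imp_intro
  have hcontra : Deriv L (insert (L.imp (L.neg φ) φ) Γ)
      (L.imp (L.neg φ) (L.neg (L.imp (L.neg φ) φ))) :=
    imp_intro (imp_intro (mp (φ := φ) assumption.weaken (assumption.mp assumption.weaken)))
  exact ((ax3 _ _).mp hcontra).mp assumption

theorem of_neg_neg (h : Deriv L Γ (L.neg (L.neg φ))) : Deriv L Γ φ :=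
  imp_of_neg_imp_self.mp (neg_imp.mp h)

theorem by_cases (hpos : Deriv L Γ (L.imp φ χ)) (hneg : Deriv L Γ (L.imp (L.neg φ) χ)) :
    Deriv L Γ χ := by
  refine of_neg_neg (imp_intro ?_)
  have hnφ : Deriv L (insert (L.neg χ) Γ) (L.neg φ) :=
    imp_intro (mp (φ := χ) assumption.weaken (hpos.weaken.weaken.mp assumption))
  exact mp (φ := χ) assumption (hneg.weaken.mp hnφ)

theorem conj_left (h : Deriv L Γ (L.conj φ ψ)) : Deriv L Γ φ :=
  of_neg_neg (imp_intro (mp (φ := L.imp φ (L.neg ψ)) h.weaken (neg_imp.mp assumption)))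

theorem iff_mp (h : Deriv L Γ (L.iff φ ψ)) : Deriv L Γ (L.imp φ ψ) :=
  conj_left h

end Deriv

theorem Deriv.box_imp_box {F : Type} {L : Lang F} {EA S : Set F} {B : F → F}
    (necB : ∀ φ, Deriv L S φ → Deriv L EA (B φ))
    (distB : ∀ φ ψ, Deriv L EA (L.imp (B (L.imp φ ψ)) (L.imp (B φ) (B ψ))))
    {φ ψ : F} (h : Deriv L S (L.imp φ ψ)) : Deriv L EA (L.imp (B φ) (B ψ)) :=
  (distB _ _).mp (necB _ h)

theorem stmt11_general {F : Type} (L : Lang F) (EA S T : Set F) (B BoxT BoxU : F → F)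
    (hExtT : ∀ φ, Deriv L EA φ → Deriv L T φ)
    (agree : ∀ ψ, Deriv L EA (L.iff (BoxU ψ) (BoxT (B ψ))))
    (necB : ∀ φ, Deriv L S φ → Deriv L EA (B φ))
    (distB : ∀ φ ψ, Deriv L EA (L.imp (B (L.imp φ ψ)) (L.imp (B φ) (B ψ))))
    (compl : ∀ ψ, Deriv L EA (L.imp (L.neg (BoxU ψ)) (B (L.neg (BoxU ψ))))) :
    ∀ ψ, Deriv L (T ∪ RfnSet L BoxT) (B (L.imp (BoxU ψ) ψ)) := by
  intro ψ
  have ofEA : ∀ φ, Deriv L EA φ → Deriv L (T ∪ RfnSet L BoxT) φ := fun φ h =>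
    (hExtT φ h).mono_s11 Set.subset_union_left
  have rfn : Deriv L (T ∪ RfnSet L BoxT) (L.imp (BoxT (B ψ)) (B ψ)) :=
    .hyp (Or.inr ⟨B ψ, rfl⟩)
  have hpos : Deriv L (T ∪ RfnSet L BoxT) (L.imp (BoxU ψ) (B (L.imp (BoxU ψ) ψ))) :=
    (ofEA _ (agree ψ).iff_mp).imp_trans <| rfn.imp_trans <|
      ofEA _ (Deriv.box_imp_box necB distB (.ax1 ψ (BoxU ψ)))
  have hneg : Deriv L (T ∪ RfnSet L BoxT) (L.imp (L.neg (BoxU ψ)) (B (L.imp (BoxU ψ) ψ))) :=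
    ofEA _ ((compl ψ).imp_trans (Deriv.box_imp_box necB distB Deriv.neg_imp))
  exact Deriv.by_cases hpos hneg

/-- Base case of the commutation lemma at successor stages.
If `U := C_S(T)`, so that `EA ⊢ Box_U ψ ↔ Box_T [1]_S ψ` for every `ψ`, then
`T + Rfn(T) ⊢ [1]_S(Box_U ψ → ψ)` for every sentence `ψ`. Here `B = [1]_S`
satisfies the Löb conditions, and `¬Box_U ψ`, being `Π₁`, satisfies provable
`Σ₂`-completeness for `B`. -/
theorem stmt11 {F : Type} (L : Lang F) (EA S T : Set F) (B BoxT BoxU : F → F)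
    (hExtT : ∀ φ, Deriv L EA φ → Deriv L T φ)
    (agree : ∀ ψ, Deriv L EA (L.iff (BoxU ψ) (BoxT (B ψ))))
    (necT : ∀ φ, Deriv L EA φ → Deriv L EA (BoxT φ))
    (distT : ∀ φ ψ, Deriv L EA (L.imp (BoxT (L.imp φ ψ)) (L.imp (BoxT φ) (BoxT ψ))))
    (necB : ∀ φ, Deriv L S φ → Deriv L EA (B φ))
    (distB : ∀ φ ψ, Deriv L EA (L.imp (B (L.imp φ ψ)) (L.imp (B φ) (B ψ))))
    (compl : ∀ ψ, Deriv L EA (L.imp (L.neg (BoxU ψ)) (B (L.neg (BoxU ψ))))) :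
    ∀ ψ, Deriv L (T ∪ RfnSet L BoxT) (B (L.imp (BoxU ψ) ψ)) :=
  stmt11_general L EA S T B BoxT BoxU hExtT agree necB distB compl
end
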